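/- For natural numbers $k \neq k'$, the ordered sets $P_k$ and $P_{k'}$ are not order-isomorphic, where $P_k = \{t \in [0,1]^{2^{\{1,\dots,k\}}} : \sum_a t_a = 1\}$ is ordered by $t \leq s$ iff $\sum_{a \in \mathcal{A}} t_a \leq \sum_{a \in \mathcal{A}} s_a$ for every upwards closed family $\mathcal{A}$ of subsets of $\{1,\dots,k\}$. -/

import Mathlib

/-!
An isomorphism of the orders `P_k` preserves the set of elements whose down-set is a chain, and
the maximal elements of that set up to equivalence. For `k > 0` these are the Dirac masses at the
singletons `{i}`. Below the Dirac mass at `c` lie exactly the elements supported on subsets of `c`;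
for `c = {i}` they form a chain, ordered by their mass at `{i}`. Conversely, if the down-set of `t`
is a chain, then `t` lives on `∅` and a single singleton: otherwise moving the mass of a set
containing `i ≠ j` to `{i}` or to `{j}`, or the masses at `{i}` and `{j}` to `∅`, would give two
incomparable elements below `t`. Finally, `P_0` is a point while `P_k` for `k > 0` is not.
-/

/-- The underlying set of `P_k`. -/
def PkSet (k : ℕ) : Set (Finset (Fin k) → ℝ) :=
  {t | (∀ a, t a ∈ Set.Icc (0 : ℝ) 1) ∧ (∑ a : Finset (Fin k), t a) = 1}

/-- A family of subsets of `{1,…,k}` is upwards closed. -/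
def UpClosed {k : ℕ} (𝒜 : Finset (Finset (Fin k))) : Prop :=
  ∀ a ∈ 𝒜, ∀ b : Finset (Fin k), a ⊆ b → b ∈ 𝒜

/-- The order on `P_k`. -/
def PkLe {k : ℕ} (t s : ↥(PkSet k)) : Prop :=
  ∀ 𝒜 : Finset (Finset (Fin k)), UpClosed 𝒜 →
    (∑ a ∈ 𝒜, t.1 a) ≤ ∑ a ∈ 𝒜, s.1 a

section LinearIicTops

variable {α β ι κ : Type*} {r : α → α → Prop} {s : β → β → Prop}

theorem RelIso.isChain_setOf_rel_apply (e : r ≃r s) {t : α} (h : IsChain r {x | r x t}) :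
    IsChain s {y | s y (e t)} := by
  have hset : {y | s y (e t)} = e.symm ⁻¹' {x | r x t} := by
    ext y
    change s y (e t) ↔ r (e.symm y) t
    rw [← e.map_rel_iff, e.apply_symm_apply]
  rw [hset]
  exact h.preimage_relIso e.symm

/-- `E` lists the maximal elements of `{t | IsChain r {x | r x t}}`, one from each class of
mutually `r`-related elements. -/
structure LinearIicTops (r : α → α → Prop) (E : ι → α) : Prop where
  isChain : ∀ i, IsChain r {x | r x (E i)}
  exists_rel : ∀ t, IsChain r {x | r x t} → ∃ i, r t (E i)
  eq_of_rel : ∀ i j, r (E i) (E j) → i = j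

theorem LinearIicTops.card_le [IsTrans α r] [Fintype ι] [Fintype κ] {E : ι → α} {F : κ → β}
    (hE : LinearIicTops r E) (hF : LinearIicTops s F) (e : r ≃r s) :
    Fintype.card ι ≤ Fintype.card κ := by
  choose φ hφ using fun i => hF.exists_rel _ (e.isChain_setOf_rel_apply (hE.isChain i))
  choose ψ hψ using fun j => hE.exists_rel _ (e.symm.isChain_setOf_rel_apply (hF.isChain j))
  -- `E i ≤ e⁻¹ (F (φ i)) ≤ E (ψ (φ i))`, so `ψ ∘ φ = id`.
  have hψφ : ∀ i, ψ (φ i) = i := fun i =>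
    (hE.eq_of_rel _ _ (_root_.trans (by simpa using e.symm.map_rel_iff.2 (hφ i)) (hψ (φ i)))).symm
  exact Fintype.card_le_of_injective φ (Function.LeftInverse.injective hψφ)

theorem LinearIicTops.card_eq [IsTrans α r] [IsTrans β s] [Fintype ι] [Fintype κ]
    {E : ι → α} {F : κ → β} (hE : LinearIicTops r E) (hF : LinearIicTops s F) (e : r ≃r s) :
    Fintype.card ι = Fintype.card κ :=
  (hE.card_le hF e).antisymm (hF.card_le hE e.symm)

end LinearIicTops

namespace PkSet

variable {k : ℕ}

theorem mem_of_nonneg {t : Finset (Fin k) → ℝ} (h0 : 0 ≤ t) (h1 : ∑ a, t a = 1) :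
    t ∈ PkSet k :=
  ⟨fun a => ⟨h0 a, h1 ▸ Finset.single_le_sum (fun b _ => h0 b) (Finset.mem_univ a)⟩, h1⟩

theorem sum_le_one (t : PkSet k) (𝒜 : Finset (Finset (Fin k))) : ∑ a ∈ 𝒜, t.1 a ≤ 1 :=
  t.2.2 ▸ Finset.sum_le_sum_of_subset_of_nonneg (Finset.subset_univ 𝒜) fun a _ _ => (t.2.1 a).1

theorem upClosed_Ici (a : Finset (Fin k)) : UpClosed (Finset.Ici a) := fun b hb c hbc => by
  simp only [Finset.mem_Ici] at hb ⊢
  exact hb.trans hbc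

theorem eq_univ_of_empty_mem {𝒜 : Finset (Finset (Fin k))} (h𝒜 : UpClosed 𝒜) (h : ∅ ∈ 𝒜) :
    𝒜 = Finset.univ :=
  Finset.eq_univ_of_forall fun b => h𝒜 ∅ h b (Finset.empty_subset b)

instance : Std.Refl (@PkLe k) := ⟨fun _ _ _ => le_rfl⟩

instance : IsTrans (PkSet k) PkLe := ⟨fun _ _ _ h₁ h₂ 𝒜 h𝒜 => (h₁ 𝒜 h𝒜).trans (h₂ 𝒜 h𝒜)⟩

def dirac (c : Finset (Fin k)) : PkSet k :=
  ⟨Pi.single c 1, mem_of_nonneg (Pi.single_nonneg.2 zero_le_one) (by simp)⟩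

theorem sum_dirac (c : Finset (Fin k)) (𝒜 : Finset (Finset (Fin k))) :
    ∑ a ∈ 𝒜, (dirac c).1 a = if c ∈ 𝒜 then 1 else 0 :=
  Finset.sum_pi_single' c (1 : ℝ) 𝒜

theorem le_dirac_iff {t : PkSet k} {c : Finset (Fin k)} :
    PkLe t (dirac c) ↔ ∀ a, t.1 a ≠ 0 → a ⊆ c := by
  constructor
  · intro h a hta
    by_contra hac
    have hpos : 0 < ∑ b ∈ Finset.Ici a, t.1 b :=
      (lt_of_le_of_ne (t.2.1 a).1 hta.symm).trans_le <|
        Finset.single_le_sum (fun b _ => (t.2.1 b).1) (Finset.mem_Ici.2 le_rfl)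
    have := h _ (upClosed_Ici a)
    rw [sum_dirac, if_neg (by simpa using hac)] at this
    linarith
  · intro h 𝒜 h𝒜
    rw [sum_dirac]
    split_ifs with hc
    · exact sum_le_one t 𝒜
    · refine (Finset.sum_eq_zero fun a ha => ?_).le
      by_contra hta
      exact hc (h𝒜 a ha c (h a hta))

def moveMass (t : PkSet k) (a b : Finset (Fin k)) : PkSet k :=
  ⟨t.1 + t.1 a • (Pi.single b 1 - Pi.single a 1), mem_of_nonneg (by
    intro c
    have hb : 0 ≤ (Pi.single b 1 : Finset (Fin k) → ℝ) c := by
      rw [Pi.single_apply]; split_ifs <;> norm_num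
    have hta := (t.2.1 a).1
    rcases eq_or_ne c a with rfl | hca
    · simp only [Pi.zero_apply, Pi.add_apply, Pi.smul_apply, Pi.sub_apply, Pi.single_eq_same,
        smul_eq_mul]
      nlinarith
    · simp only [Pi.zero_apply, Pi.add_apply, Pi.smul_apply, Pi.sub_apply,
        Pi.single_eq_of_ne hca, smul_eq_mul]
      nlinarith [(t.2.1 c).1])
    (by simp [Finset.sum_add_distrib, ← Finset.mul_sum, t.2.2])⟩

theorem sum_moveMass (t : PkSet k) (a b : Finset (Fin k)) (𝒜 : Finset (Finset (Fin k))) :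
    ∑ c ∈ 𝒜, (moveMass t a b).1 c =
      ∑ c ∈ 𝒜, t.1 c + t.1 a * ((if b ∈ 𝒜 then 1 else 0) - if a ∈ 𝒜 then 1 else 0) := by
  simp [moveMass, Finset.sum_add_distrib, ← Finset.mul_sum, Finset.sum_sub_distrib]

theorem moveMass_le (t : PkSet k) {a b : Finset (Fin k)} (hba : b ⊆ a) :
    PkLe (moveMass t a b) t := by
  intro 𝒜 h𝒜
  rw [sum_moveMass]
  have hta := (t.2.1 a).1
  split_ifs with hb ha ha
  · simp
  · exact absurd (h𝒜 b hb a hba) ha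
  · nlinarith
  · simp

theorem not_moveMass_le_moveMass (t : PkSet k) {a b a' b' : Finset (Fin k)}
    {𝒜 : Finset (Finset (Fin k))} (h𝒜 : UpClosed 𝒜) (hab : b ∈ 𝒜 ↔ a ∈ 𝒜) (ha' : a' ∈ 𝒜)
    (hb' : b' ∉ 𝒜) (ht : 0 < t.1 a') :
    ¬ PkLe (moveMass t a b) (moveMass t a' b') := fun h => by
  have := h 𝒜 h𝒜
  rw [sum_moveMass, sum_moveMass, if_pos ha', if_neg hb'] at this
  simp only [hab, sub_self, mul_zero, add_zero] at this
  linarith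

theorem not_isChain_of_moveMass (t : PkSet k) {a b a' b' : Finset (Fin k)} (hba : b ⊆ a)
    (hba' : b' ⊆ a') (h : ¬ PkLe (moveMass t a b) (moveMass t a' b'))
    (h' : ¬ PkLe (moveMass t a' b') (moveMass t a b)) : ¬ IsChain PkLe {x | PkLe x t} :=
  fun hch => (hch.total (moveMass_le t hba) (moveMass_le t hba')).elim h h'

theorem eq_singleton_of_isChain {t : PkSet k} (hch : IsChain PkLe {x | PkLe x t})
    {a : Finset (Fin k)} {i : Fin k} (hta : 0 < t.1 a) (hi : i ∈ a) : a = {i} := by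
  refine Finset.eq_singleton_iff_unique_mem.2 ⟨hi, fun j hj => ?_⟩
  by_contra hji
  refine not_isChain_of_moveMass t (Finset.singleton_subset_iff.2 hi)
    (Finset.singleton_subset_iff.2 hj) ?_ ?_ hch
  · exact not_moveMass_le_moveMass t (upClosed_Ici {i}) (by simp [hi]) (by simp [hi])
      (by simp [Ne.symm hji]) hta
  · exact not_moveMass_le_moveMass t (upClosed_Ici {j}) (by simp [hj]) (by simp [hj])
      (by simp [hji]) hta

theorem eq_of_isChain {t : PkSet k} (hch : IsChain PkLe {x | PkLe x t}) {i j : Fin k}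
    (hi : 0 < t.1 {i}) (hj : 0 < t.1 {j}) : i = j := by
  by_contra hij
  refine not_isChain_of_moveMass t (Finset.empty_subset {i}) (Finset.empty_subset {j}) ?_ ?_ hch
  · exact not_moveMass_le_moveMass t (upClosed_Ici {j}) (by simp [Ne.symm hij]) (by simp)
      (by simp) hj
  · exact not_moveMass_le_moveMass t (upClosed_Ici {i}) (by simp [hij]) (by simp)
      (by simp) hi

theorem sum_of_support_subset_singleton {t : PkSet k} {i : Fin k}
    (ht : ∀ a, t.1 a ≠ 0 → a ⊆ {i}) {𝒜 : Finset (Finset (Fin k))} (h𝒜 : UpClosed 𝒜) :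
    ∑ a ∈ 𝒜, t.1 a = if ∅ ∈ 𝒜 then 1 else if {i} ∈ 𝒜 then t.1 {i} else 0 := by
  have hzero : ∀ a ∈ 𝒜, ∅ ∉ 𝒜 → a ≠ {i} → t.1 a = 0 := fun a ha h0 hai => by
    by_contra hta
    rcases Finset.subset_singleton_iff.1 (ht a hta) with rfl | rfl
    exacts [h0 ha, hai rfl]
  split_ifs with h0 hi
  · rw [eq_univ_of_empty_mem h𝒜 h0, t.2.2]
  · exact Finset.sum_eq_single_of_mem _ hi fun a ha hai => hzero a ha h0 hai
  · exact Finset.sum_eq_zero fun a ha => hzero a ha h0 (ne_of_mem_of_not_mem ha hi)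

theorem isChain_le_dirac_singleton (i : Fin k) : IsChain PkLe {x | PkLe x (dirac {i})} := by
  intro s₁ hs₁ s₂ hs₂ _
  have key : ∀ {u v : PkSet k}, PkLe u (dirac {i}) → PkLe v (dirac {i}) →
      u.1 {i} ≤ v.1 {i} → PkLe u v := fun hu hv huv 𝒜 h𝒜 => by
    rw [sum_of_support_subset_singleton (le_dirac_iff.1 hu) h𝒜,
      sum_of_support_subset_singleton (le_dirac_iff.1 hv) h𝒜]
    split_ifs <;> simp [huv]
  exact (le_total (s₁.1 {i}) (s₂.1 {i})).imp (key hs₁ hs₂) (key hs₂ hs₁)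

theorem exists_le_dirac_singleton [NeZero k] {t : PkSet k}
    (hch : IsChain PkLe {x | PkLe x t}) : ∃ i, PkLe t (dirac {i}) := by
  have hpos : ∀ a, t.1 a ≠ 0 → 0 < t.1 a := fun a hta => lt_of_le_of_ne (t.2.1 a).1 hta.symm
  set U := Finset.univ.filter fun j => ∃ a, t.1 a ≠ 0 ∧ j ∈ a
  have hU : U.card ≤ 1 := Finset.card_le_one_iff.2 fun hj hj' => by
    obtain ⟨a, hta, hja⟩ := (Finset.mem_filter.1 hj).2
    obtain ⟨b, htb, hjb⟩ := (Finset.mem_filter.1 hj').2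
    obtain rfl := eq_singleton_of_isChain hch (hpos a hta) hja
    obtain rfl := eq_singleton_of_isChain hch (hpos b htb) hjb
    exact eq_of_isChain hch (hpos _ hta) (hpos _ htb)
  obtain ⟨i, hi⟩ := Finset.card_le_one_iff_subset_singleton.1 hU
  exact ⟨i, le_dirac_iff.2 fun a hta j hja =>
    hi (Finset.mem_filter.2 ⟨Finset.mem_univ j, a, hta, hja⟩)⟩

theorem linearIicTops_dirac_singleton [NeZero k] :
    LinearIicTops PkLe fun i : Fin k => dirac {i} where
  isChain := isChain_le_dirac_singleton
  exists_rel _ := exists_le_dirac_singleton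
  eq_of_rel i j h := Finset.singleton_subset_singleton.1 <|
    le_dirac_iff.1 h {i} (by simp [dirac])

theorem subsingleton_iff : Subsingleton (PkSet k) ↔ k = 0 := by
  refine ⟨fun _ => by_contra fun hk => ?_, fun hk => ?_⟩
  · have : NeZero k := ⟨hk⟩
    have hne : dirac (∅ : Finset (Fin k)) ≠ dirac {0} := fun h => by
      simpa [dirac] using congrArg (fun t : PkSet k => t.1 ∅) h
    exact hne (Subsingleton.elim _ _)
  · subst hk
    refine ⟨fun t s => Subtype.ext <| funext fun a => ?_⟩
    rw [Unique.eq_default a, ← Fintype.sum_unique t.1, t.2.2, ← Fintype.sum_unique s.1, s.2.2]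

end PkSet

theorem stmt5 (k k' : ℕ) (h : k ≠ k') :
    ¬ ∃ e : ↥(PkSet k) ≃ ↥(PkSet k'),
        ∀ t s : ↥(PkSet k), PkLe t s ↔ PkLe (e t) (e s) := by
  rintro ⟨e, he⟩
  have hzero : k = 0 ↔ k' = 0 :=
    PkSet.subsingleton_iff.symm.trans (e.subsingleton_congr.trans PkSet.subsingleton_iff)
  obtain rfl | hk := eq_or_ne k 0
  · exact h (hzero.1 rfl).symm
  have : NeZero k := ⟨hk⟩
  have : NeZero k' := ⟨mt hzero.2 hk⟩
  have hcard := PkSet.linearIicTops_dirac_singleton.card_eq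
    PkSet.linearIicTops_dirac_singleton ⟨e, (he _ _).symm⟩
  exact h (by simpa using hcard)
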